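/- Fix an integer K ≥ 0. For every family (τ_α)_{α∈(0,1)} of detection rules in the change-point model satisfying P(τ_α < Γ) ≤ α for all α ∈ (0,1), the probability that the rule stops only after a delay exceeding K (or never stops) tends to one as the false-alarm level goes to zero: lim_{α→0⁺} P(τ_α > Γ + K) = 1, where the event {τ_α > Γ + K} includes the event {τ_α = ∞}. (This makes precise the claim of Theorems 1 and 2 that, with high probability, the attacker detects the change only after a constant delay.) -/

import Mathlib

/-!
Condition on the change point `Γ = k + 1`. Stopping no later than `Γ + K` means stopping either
before `Γ` or in the window `[Γ, Γ + K]`. The first event has conditional probability at most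
`α / P(Γ = k + 1)`. The window event is determined by the first `k + 1 + K` observations, whose
laws under change points `k + 1` and `k + K + 2` are products of Gaussians with a common
variance, hence mutually absolutely continuous; under the later change point the window event
is a false alarm, so its probability is at most `α / P(Γ = k + K + 2)`. Absolute continuity of
a finite measure makes the window probability under change point `k + 1` vanish as well, so
`P(τ_α > Γ + K | Γ = k + 1) → 1` for each `k`, and dominated convergence over `k` concludes.
-/

open MeasureTheory ProbabilityTheory Filter Set

noncomputable section

/-- The change-point probability measure `P = Σ_{k≥1} (1−ρ)^{k−1} ρ · (δ_k ⊗ ν_k)` on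
`ℕ × (ℕ → ℝ)`.  The first coordinate is the change point `Γ` (geometric with parameter `ρ`),
the second coordinate is the observation sequence `(x₁, x₂, …)`, encoded as a function
`ℕ → ℝ` whose `i`-th value (0-based) is the observation `X_{i+1}`. -/
def changePointMeasure (ρ : ℝ) (ν : ℕ → Measure (ℕ → ℝ)) : Measure (ℕ × (ℕ → ℝ)) :=
  Measure.sum fun k : ℕ =>
    (ENNReal.ofReal ((1 - ρ) ^ k * ρ)) • ((Measure.dirac (k + 1)).prod (ν (k + 1)))

/-- `ν k` is the countable product probability measure on sequences `(x₁, x₂, …) ∈ ℝ^ℕ`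
whose `i`-th factor (1-based) is `N(0,σ²)` for `i < k` and `N(A,σ²)` for `i ≥ k`:
each `ν k` is a probability measure whose finite-dimensional marginals are the
corresponding finite Gaussian product measures.  (With 0-based coordinates, the factor of
coordinate `i`, i.e. of observation `X_{i+1}`, is `N(0,σ²)` iff `i + 1 < k`.) -/
def IsChangePointFamily (σ A : ℝ) (ν : ℕ → Measure (ℕ → ℝ)) : Prop :=
  (∀ k, IsProbabilityMeasure (ν k)) ∧
    ∀ k n : ℕ,
      (ν k).map (fun x (i : Fin n) => x i) =
        Measure.pi fun i : Fin n =>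
          if (i : ℕ) + 1 < k then gaussianReal 0 ⟨σ ^ 2, sq_nonneg σ⟩
          else gaussianReal A ⟨σ ^ 2, sq_nonneg σ⟩

/-- A detection rule: a (possibly infinite valued) stopping time `τ` on observation
sequences such that for every `n ≥ 1` the event `{τ = n}` is measurable with respect to
the σ-algebra generated by the first `n` observations `X₁, …, X_n`. -/
def IsDetectionRule (τ : (ℕ → ℝ) → ℕ∞) : Prop :=
  ∀ n : ℕ, 1 ≤ n →
    MeasurableSet[MeasurableSpace.comap (fun x : ℕ → ℝ => fun i : Fin n => x i) inferInstance]
      {x | τ x = (n : ℕ∞)}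

open scoped Topology ENNReal

section AbsolutelyContinuous

variable {α β ι : Type*} {mα : MeasurableSpace α} {mβ : MeasurableSpace β}

theorem MeasureTheory.Measure.AbsolutelyContinuous.tendsto_measure_zero {μ ν : Measure α}
    [IsFiniteMeasure μ] [μ.HaveLebesgueDecomposition ν] [SFinite ν] (h : μ ≪ ν)
    {l : Filter ι} {s : ι → Set α} (hs : Tendsto (ν ∘ s) l (𝓝 0)) :
    Tendsto (μ ∘ s) l (𝓝 0) := by
  simp_rw [Function.comp_def, ← Measure.setLIntegral_rnDeriv h]
  exact tendsto_setLIntegral_zero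
    (Measure.lintegral_rnDeriv_le.trans_lt (measure_lt_top μ univ)).ne hs

theorem tendsto_measure_zero_of_map_absolutelyContinuous {f : α → β} (hf : Measurable f)
    {μ ν : Measure α} [IsFiniteMeasure μ] [IsFiniteMeasure ν] (h : μ.map f ≪ ν.map f)
    {l : Filter ι} {s : ι → Set α} (hs : ∀ᶠ i in l, MeasurableSet[mβ.comap f] (s i))
    (hν : Tendsto (ν ∘ s) l (𝓝 0)) : Tendsto (μ ∘ s) l (𝓝 0) := by
  have himage : Tendsto (fun i => ν.map f (f '' s i)) l (𝓝 0) := by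
    refine tendsto_of_tendsto_of_tendsto_of_le_of_le' tendsto_const_nhds hν
      (Eventually.of_forall fun _ => zero_le) ?_
    filter_upwards [hs] with i hi
    obtain ⟨t, ht, hst⟩ := MeasurableSpace.measurableSet_comap.mp hi
    rw [Function.comp_apply, ← hst]
    calc ν.map f (f '' (f ⁻¹' t)) ≤ ν.map f t := measure_mono (image_preimage_subset f t)
      _ = ν (f ⁻¹' t) := Measure.map_apply hf ht
  refine tendsto_of_tendsto_of_tendsto_of_le_of_le tendsto_const_nhds
    ((h.tendsto_measure_zero (s := fun i => f '' s i)) himage) (fun _ => zero_le) fun i => ?_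
  calc μ (s i) ≤ μ (f ⁻¹' (f '' s i)) := measure_mono (subset_preimage_image f (s i))
    _ ≤ μ.map f (f '' s i) := Measure.le_map_apply hf.aemeasurable _

theorem MeasureTheory.Measure.AbsolutelyContinuous.pi_fin : ∀ {n : ℕ} {X : Fin n → Type*}
    [∀ i, MeasurableSpace (X i)] {μ ν : ∀ i, Measure (X i)} [∀ i, SigmaFinite (μ i)]
    [∀ i, SigmaFinite (ν i)], (∀ i, μ i ≪ ν i) → Measure.pi μ ≪ Measure.pi ν
  | 0, _, _, μ, ν, _, _, _ => by rw [Measure.pi_of_empty μ, Measure.pi_of_empty ν]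
  | n + 1, _, _, μ, ν, _, _, h => by
    rw [← (measurePreserving_piFinSuccAbove μ 0).symm.map_eq,
      ← (measurePreserving_piFinSuccAbove ν 0).symm.map_eq]
    exact ((h 0).prod (pi_fin fun _ => h _)).map (MeasurableEquiv.measurable _)

theorem MeasureTheory.Measure.AbsolutelyContinuous.pi {ι : Type*} [Fintype ι] {X : ι → Type*}
    [∀ i, MeasurableSpace (X i)] {μ ν : ∀ i, Measure (X i)} [∀ i, SigmaFinite (μ i)]
    [∀ i, SigmaFinite (ν i)] (h : ∀ i, μ i ≪ ν i) : Measure.pi μ ≪ Measure.pi ν := by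
  let e := (Fintype.equivFin ι).symm
  rw [← (measurePreserving_piCongrLeft μ e).map_eq, ← (measurePreserving_piCongrLeft ν e).map_eq]
  exact (pi_fin fun i => h (e i)).map (MeasurableEquiv.measurable _)

end AbsolutelyContinuous

theorem ProbabilityTheory.gaussianReal_absolutelyContinuous_gaussianReal (μ μ' : ℝ)
    {v v' : NNReal} (hv : v ≠ 0) (hv' : v' ≠ 0) : gaussianReal μ v ≪ gaussianReal μ' v' :=
  (gaussianReal_absolutelyContinuous μ hv).trans (gaussianReal_absolutelyContinuous' μ' hv')

theorem ProbabilityTheory.pi_gaussianReal_absolutelyContinuous {ι : Type*} [Fintype ι]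
    (μ μ' : ι → ℝ) {v : NNReal} (hv : v ≠ 0) :
    Measure.pi (fun i => gaussianReal (μ i) v) ≪ Measure.pi (fun i => gaussianReal (μ' i) v) :=
  .pi fun _ => gaussianReal_absolutelyContinuous_gaussianReal _ _ hv hv

theorem ENNReal.tendsto_tsum_of_dominated_convergence {ι β : Type*} {l : Filter ι}
    [l.IsCountablyGenerated] {f : ι → β → ℝ≥0∞} {g bound : β → ℝ≥0∞}
    (h_sum : ∑' k, bound k ≠ ∞) (h_bound : ∀ᶠ i in l, ∀ k, f i k ≤ bound k)
    (h_lim : ∀ k, Tendsto (f · k) l (𝓝 (g k))) :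
    Tendsto (fun i => ∑' k, f i k) l (𝓝 (∑' k, g k)) := by
  let : MeasurableSpace β := ⊤
  simp_rw [← lintegral_count]
  exact tendsto_lintegral_filter_of_dominated_convergence bound
    (Eventually.of_forall fun _ => measurable_from_top) (h_bound.mono fun _ h => ae_of_all _ h)
    (by rwa [lintegral_count]) (ae_of_all _ h_lim)

theorem IsDetectionRule.measurableSet_Icc {τ : (ℕ → ℝ) → ℕ∞} (hτ : IsDetectionRule τ)
    {j n : ℕ} (hj : 1 ≤ j) :
    MeasurableSet[MeasurableSpace.comap (fun x : ℕ → ℝ => fun i : Fin n => x i) inferInstance]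
      {x | (j : ℕ∞) ≤ τ x ∧ τ x ≤ n} := by
  have hcomap_mono : ∀ m ≤ n,
      MeasurableSpace.comap (fun x : ℕ → ℝ => fun i : Fin m => x i) inferInstance ≤
        MeasurableSpace.comap (fun x : ℕ → ℝ => fun i : Fin n => x i) inferInstance := by
    intro m hm
    have hrestrict : (fun x : ℕ → ℝ => fun i : Fin m => x i) =
        (fun y : Fin n → ℝ => fun i : Fin m => y (Fin.castLE hm i)) ∘
          (fun x : ℕ → ℝ => fun i : Fin n => x i) := rfl
    rw [hrestrict, ← MeasurableSpace.comap_comp]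
    exact MeasurableSpace.comap_mono (by fun_prop : Measurable _).comap_le
  have hunion : {x | (j : ℕ∞) ≤ τ x ∧ τ x ≤ n} = ⋃ m ∈ Finset.Icc j n, {x | τ x = m} := by
    ext x
    simp only [mem_iUnion, Finset.mem_Icc, exists_prop]
    constructor
    · rintro ⟨hjx, hxn⟩
      obtain ⟨m, hm⟩ := ENat.ne_top_iff_exists.mp (ne_top_of_le_ne_top (ENat.natCast_ne_top n) hxn)
      rw [← hm] at hjx hxn
      exact ⟨m, ⟨Nat.cast_le.mp hjx, Nat.cast_le.mp hxn⟩, hm.symm⟩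
    · rintro ⟨m, ⟨hjm, hmn⟩, hm : τ x = m⟩
      change _ ≤ τ x ∧ τ x ≤ _
      rw [hm]
      exact ⟨Nat.cast_le.mpr hjm, Nat.cast_le.mpr hmn⟩
  rw [hunion]
  exact .biUnion (Finset.countable_toSet _) fun m hm =>
    hcomap_mono m (Finset.mem_Icc.mp hm).2 _ (hτ m (hj.trans (Finset.mem_Icc.mp hm).1))

theorem IsChangePointFamily.map_absolutelyContinuous {σ A : ℝ} {ν : ℕ → Measure (ℕ → ℝ)}
    (hν : IsChangePointFamily σ A ν) (hσ : σ ≠ 0) (j m n : ℕ) :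
    (ν j).map (fun x (i : Fin n) => x i) ≪ (ν m).map (fun x (i : Fin n) => x i) := by
  have hv : (⟨σ ^ 2, sq_nonneg σ⟩ : NNReal) ≠ 0 := by
    simpa [← NNReal.coe_ne_zero] using hσ
  have hite : ∀ (c : Prop) [Decidable c], (if c then gaussianReal 0 ⟨σ ^ 2, sq_nonneg σ⟩
      else gaussianReal A ⟨σ ^ 2, sq_nonneg σ⟩) = gaussianReal (if c then 0 else A) _ :=
    fun c _ => (apply_ite (gaussianReal · _) c 0 A).symm
  simp only [hν.2, hite]
  exact pi_gaussianReal_absolutelyContinuous _ _ hv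

theorem changePointMeasure_apply (ρ : ℝ) (ν : ℕ → Measure (ℕ → ℝ)) [∀ k, SFinite (ν k)]
    (S : Set (ℕ × (ℕ → ℝ))) :
    changePointMeasure ρ ν S =
      ∑' k, ENNReal.ofReal ((1 - ρ) ^ k * ρ) * ν (k + 1) (Prod.mk (k + 1) ⁻¹' S) := by
  simp [changePointMeasure, Measure.sum_apply_of_countable, Measure.dirac_prod,
    (measurableEmbedding_prodMk_left _).map_apply]

theorem tsum_ofReal_geometric_mul {ρ : ℝ} (hρ₀ : 0 < ρ) (hρ₁ : ρ ≤ 1) :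
    ∑' k, ENNReal.ofReal ((1 - ρ) ^ k * ρ) = 1 := by
  have h1ρ : 0 ≤ 1 - ρ := by linarith
  have h1ρ' : 1 - ρ < 1 := by linarith
  rw [← ENNReal.ofReal_tsum_of_nonneg (fun k => by positivity)
    ((summable_geometric_of_lt_one h1ρ h1ρ').mul_right ρ), tsum_mul_right,
    tsum_geometric_of_lt_one h1ρ h1ρ', sub_sub_cancel, inv_mul_cancel₀ hρ₀.ne', ENNReal.ofReal_one]

section ChangePoint

variable {ρ : ℝ} {ν : ℕ → Measure (ℕ → ℝ)} {ι : Type*} {l : Filter ι} {τ : ι → (ℕ → ℝ) → ℕ∞}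

theorem tendsto_measure_stop_before_changePoint [∀ k, SFinite (ν k)] (hρ₀ : 0 < ρ) (hρ₁ : ρ < 1)
    (hFA : Tendsto (fun i => changePointMeasure ρ ν {ω | τ i ω.2 < ω.1}) l (𝓝 0)) (k : ℕ) :
    Tendsto (fun i => ν (k + 1) {x | τ i x < (k + 1 : ℕ)}) l (𝓝 0) := by
  set w := ENNReal.ofReal ((1 - ρ) ^ k * ρ)
  have hw : w ≠ 0 := by
    simp only [w, ne_eq, ENNReal.ofReal_eq_zero, not_le]
    exact mul_pos (pow_pos (by linarith) k) hρ₀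
  have hbound : ∀ i, w * ν (k + 1) {x | τ i x < (k + 1 : ℕ)} ≤
      changePointMeasure ρ ν {ω | τ i ω.2 < ω.1} := fun i => by
    rw [changePointMeasure_apply]
    exact ENNReal.le_tsum (f := fun k => ENNReal.ofReal ((1 - ρ) ^ k * ρ) * _) k
  refine tendsto_of_tendsto_of_tendsto_of_le_of_le tendsto_const_nhds ?_
    (fun _ => zero_le) fun i => (ENNReal.mul_le_iff_le_inv hw ENNReal.ofReal_ne_top).mp (hbound i)
  simpa using ENNReal.Tendsto.const_mul hFA (Or.inr (ENNReal.inv_ne_top.mpr hw))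

theorem tendsto_measure_stop_after_changePoint_add {σ A : ℝ} (hσ : σ ≠ 0) (hν : IsChangePointFamily σ A ν)
    (hρ₀ : 0 < ρ) (hρ₁ : ρ < 1) (hτ : ∀ᶠ i in l, IsDetectionRule (τ i))
    (hFA : Tendsto (fun i => changePointMeasure ρ ν {ω | τ i ω.2 < ω.1}) l (𝓝 0)) (K k : ℕ) :
    Tendsto (fun i => ν (k + 1) {x | ((k + 1 + K : ℕ) : ℕ∞) < τ i x}) l (𝓝 1) := by
  have := hν.1
  have hearly := tendsto_measure_stop_before_changePoint hρ₀ hρ₁ hFA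
  set window := fun i => {x | ((k + 1 : ℕ) : ℕ∞) ≤ τ i x ∧ τ i x ≤ (k + 1 + K : ℕ)}
  have hwindow : Tendsto (fun i => ν (k + 1) (window i)) l (𝓝 0) := by
    refine tendsto_measure_zero_of_map_absolutelyContinuous (by fun_prop)
      (hν.map_absolutelyContinuous hσ (k + 1) (k + 1 + K + 1) (k + 1 + K))
      (hτ.mono fun i hi => hi.measurableSet_Icc (by omega)) ?_
    refine tendsto_of_tendsto_of_tendsto_of_le_of_le tendsto_const_nhds (hearly (k + 1 + K))
      (fun _ => zero_le) fun i => measure_mono fun x hx => ?_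
    exact hx.2.trans_lt (Nat.cast_lt.mpr (Nat.lt_succ_self _))
  have hcover : ∀ i, 1 ≤ ν (k + 1) {x | ((k + 1 + K : ℕ) : ℕ∞) < τ i x} +
      (ν (k + 1) {x | τ i x < (k + 1 : ℕ)} + ν (k + 1) (window i)) := fun i => by
    rw [← measure_univ (μ := ν (k + 1))]
    refine (measure_mono fun x _ => ?_).trans
      ((measure_union_le _ _).trans (add_le_add le_rfl (measure_union_le _ _)))
    rcases lt_or_ge ((k + 1 + K : ℕ) : ℕ∞) (τ i x) with hlate | hnotlate
    · exact .inl hlate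
    rcases lt_or_ge (τ i x) (k + 1 : ℕ) with hbefore | hnotbefore
    · exact .inr (.inl hbefore)
    · exact .inr (.inr ⟨hnotbefore, hnotlate⟩)
  have hlower := ENNReal.Tendsto.sub tendsto_const_nhds ((hearly k).add hwindow)
    (Or.inl ENNReal.one_ne_top)
  rw [add_zero, tsub_zero] at hlower
  exact tendsto_of_tendsto_of_tendsto_of_le_of_le hlower tendsto_const_nhds
    (fun i => tsub_le_iff_right.mpr (hcover i)) fun _ => prob_le_one

end ChangePoint

theorem detection_delay_exceeds_K_prob_tendsto_one_general
    (σ A ρ : ℝ) (hσ : 0 < σ) (hρ : ρ ∈ Set.Ioo (0 : ℝ) 1)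
    (ν : ℕ → Measure (ℕ → ℝ)) (hν : IsChangePointFamily σ A ν)
    (K : ℕ)
    (τ : ℝ → (ℕ → ℝ) → ℕ∞)
    (hτ : ∀ α ∈ Set.Ioo (0 : ℝ) 1, IsDetectionRule (τ α))
    (hFA : ∀ α ∈ Set.Ioo (0 : ℝ) 1,
      changePointMeasure ρ ν {ω | τ α ω.2 < (ω.1 : ℕ∞)} ≤ ENNReal.ofReal α) :
    Filter.Tendsto
      (fun α : ℝ =>
        changePointMeasure ρ ν {ω | ((ω.1 + K : ℕ) : ℕ∞) < τ α ω.2})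
      (nhdsWithin 0 (Set.Ioo (0 : ℝ) 1)) (nhds 1) := by
  have := hν.1
  have hFA_tendsto : Tendsto (fun α => changePointMeasure ρ ν {ω | τ α ω.2 < ω.1})
      (𝓝[Ioo 0 1] 0) (𝓝 0) := by
    refine tendsto_of_tendsto_of_tendsto_of_le_of_le' tendsto_const_nhds ?_
      (Eventually.of_forall fun _ => zero_le) (eventually_nhdsWithin_of_forall hFA)
    simpa using (ENNReal.tendsto_ofReal (tendsto_id (x := 𝓝 (0 : ℝ)))).mono_left
      nhdsWithin_le_nhds
  have hdelay := tendsto_measure_stop_after_changePoint_add hσ.ne' hν hρ.1 hρ.2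
    (eventually_nhdsWithin_of_forall hτ) hFA_tendsto K
  have hlim := ENNReal.tendsto_tsum_of_dominated_convergence
    ((tsum_ofReal_geometric_mul hρ.1 hρ.2.le).trans_ne ENNReal.one_ne_top)
    (Eventually.of_forall fun _ k => mul_le_of_le_one_right' prob_le_one)
    fun k => ENNReal.Tendsto.const_mul (hdelay k) (Or.inr ENNReal.ofReal_ne_top)
  simp only [mul_one, tsum_ofReal_geometric_mul hρ.1 hρ.2.le] at hlim
  simp_rw [changePointMeasure_apply]
  exact hlim

/-- for any family of detection rules with false-alarm probability at most `α`,
the probability that the rule stops only after a delay exceeding `K` (or never stops, i.e.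
`τ_α = ∞`) tends to one as the false-alarm level `α` tends to zero:
`lim_{α→0⁺} P(τ_α > Γ + K) = 1`. -/
theorem detection_delay_exceeds_K_prob_tendsto_one
    (σ A ρ : ℝ) (hσ : 0 < σ) (hA : 0 < A) (hρ : ρ ∈ Set.Ioo (0 : ℝ) 1)
    (ν : ℕ → Measure (ℕ → ℝ)) (hν : IsChangePointFamily σ A ν)
    (K : ℕ)
    (τ : ℝ → (ℕ → ℝ) → ℕ∞)
    (hτ : ∀ α ∈ Set.Ioo (0 : ℝ) 1, IsDetectionRule (τ α))
    (hFA : ∀ α ∈ Set.Ioo (0 : ℝ) 1,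
      changePointMeasure ρ ν {ω | τ α ω.2 < (ω.1 : ℕ∞)} ≤ ENNReal.ofReal α) :
    Filter.Tendsto
      (fun α : ℝ =>
        changePointMeasure ρ ν {ω | ((ω.1 + K : ℕ) : ℕ∞) < τ α ω.2})
      (nhdsWithin 0 (Set.Ioo (0 : ℝ) 1)) (nhds 1) :=
  detection_delay_exceeds_K_prob_tendsto_one_general σ A ρ hσ hρ ν hν K τ hτ hFA
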